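/- Let S be a nonempty finite set of positive integers. The following are equivalent: (i) for every nonempty subset T of S, the product ∏_{z ∈ T} z is not a perfect square; (ii) for every function ε : S → {-1, 1}, the set of odd primes p such that χ_p(z) = ε(z) for every z ∈ S is infinite. -/

import Mathlib

open Finset

/-!
Fix `N = 4 ∏_{z ∈ S} z`. By periodicity of the Jacobi symbol, each `z ∈ S` gives a `±1`-valued
character `u ↦ J(z | u)` of `(ℤ/N)ˣ`, and the product of these characters over `T ⊆ S` is
`J(∏_{z ∈ T} z | ·)`. If `m` is not a square, quadratic reciprocity and Dirichlet's theorem give a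
prime `p` with `J(m | p) = -1`, so all these products are nontrivial; orthogonality of characters
then shows that every sign pattern `ε` is attained by some unit `u`, and Dirichlet's theorem
supplies infinitely many primes `p ≡ u (mod N)`, for which `χ_p(z) = J(z | u) = ε(z)`.
Conversely, if `∏_{z ∈ T} z` is a square then `∏_{z ∈ T} χ_p(z) ≠ -1`, so the pattern that is `-1`
at exactly one element of `T` is never realised.
-/

theorem exists_forall_apply_eq_of_prod_ne_one {G ι : Type*} [Group G] [Fintype G] [Fintype ι]
    (χ : ι → G →* ℤ) (hχ : ∀ T : Finset ι, T.Nonempty → ∏ i ∈ T, χ i ≠ 1)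
    (ε : ι → ℤ) (hε : ∀ i, ε i = 1 ∨ ε i = -1) : ∃ g, ∀ i, χ i g = ε i := by
  classical
  -- `∏ i, (1 + ε i * χ i g)` vanishes unless `χ · g = ε`.
  have hsum : ∑ g, ∏ i, (1 + ε i * χ i g) = Fintype.card G := by
    calc ∑ g, ∏ i, (1 + ε i * χ i g)
        = ∑ T ∈ univ.powerset, (∏ i ∈ T, ε i) * ∑ g, (∏ i ∈ T, χ i) g := by
          simp_rw [prod_one_add, mul_sum, MonoidHom.finsetProd_apply, prod_mul_distrib]
          exact sum_comm
      _ = Fintype.card G := by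
          rw [sum_eq_single ∅]
          · simp
          · intro T _ hT
            rw [sum_hom_units_eq_zero _ (hχ T (nonempty_iff_ne_empty.2 hT)), mul_zero]
          · simp
  obtain ⟨g, -, hg⟩ := exists_ne_zero_of_sum_ne_zero
    (hsum ▸ Nat.cast_ne_zero.2 Fintype.card_ne_zero)
  refine ⟨g, fun i => ?_⟩
  have hi : 1 + ε i * χ i g ≠ 0 := prod_ne_zero_iff.1 hg i (mem_univ i)
  rcases Int.isUnit_iff.1 ((Group.isUnit g).map (χ i)) with h | h <;>
    rcases hε i with h' | h' <;> simp only [h, h'] at hi ⊢ <;> norm_num at hi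

theorem Nat.ModEq.odd_iff {a b n : ℕ} (h : a ≡ b [MOD n]) (hn : 2 ∣ n) : Odd a ↔ Odd b := by
  rw [Nat.odd_iff, Nat.odd_iff, show a % 2 = b % 2 from h.of_dvd hn]

namespace jacobiSym

theorem eq_of_modEq_right {a : ℤ} {b b' N : ℕ} (hN : 4 * a.natAbs ∣ N) (hb : Odd b)
    (h : b ≡ b' [MOD N]) : jacobiSym a b = jacobiSym a b' := by
  have h2 : 2 ∣ N := (dvd_mul_of_dvd_left (by norm_num) _).trans hN
  rw [mod_right a hb, mod_right a ((h.odd_iff h2).1 hb), show b % _ = b' % _ from h.of_dvd hN]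

theorem prod_left {ι : Type*} (s : Finset ι) (f : ι → ℤ) (b : ℕ) :
    jacobiSym (∏ i ∈ s, f i) b = ∏ i ∈ s, jacobiSym (f i) b :=
  map_prod (⟨⟨(jacobiSym · b), one_left b⟩, fun x y => mul_left x y b⟩ : ℤ →* ℤ) f s

end jacobiSym

theorem ZMod.odd_val_of_two_dvd {N : ℕ} (hN : 2 ∣ N) (u : (ZMod N)ˣ) : Odd (u : ZMod N).val :=
  Nat.coprime_two_right.1 ((ZMod.val_coe_unit_coprime u).coprime_dvd_right hN)

@[simps]
def jacobiSymUnitsHom (a : ℤ) {N : ℕ} (hN : 4 * a.natAbs ∣ N) : (ZMod N)ˣ →* ℤ where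
  toFun u := jacobiSym a (u : ZMod N).val
  map_one' := by
    rw [Units.val_one, ZMod.val_one_eq_one_mod,
      ← jacobiSym.eq_of_modEq_right hN odd_one (Nat.mod_modEq 1 N).symm, jacobiSym.one_right]
  map_mul' u v := by
    have h2 : 2 ∣ N := (dvd_mul_of_dvd_left (by norm_num) _).trans hN
    have hu := ZMod.odd_val_of_two_dvd h2 u
    have hv := ZMod.odd_val_of_two_dvd h2 v
    rw [Units.val_mul, ZMod.val_mul,
      ← jacobiSym.eq_of_modEq_right hN (hu.mul hv) (Nat.mod_modEq _ N).symm,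
      jacobiSym.mul_right' a hu.pos.ne' hv.pos.ne']

theorem Nat.forall_exists_prime_gt_and_modEq_and_modEq (n : ℕ) {m₁ m₂ a₁ a₂ : ℕ}
    (hm₁ : m₁ ≠ 0) (hm₂ : m₂ ≠ 0) (hm : m₁.Coprime m₂) (ha₁ : a₁.Coprime m₁)
    (ha₂ : a₂.Coprime m₂) :
    ∃ p > n, p.Prime ∧ p ≡ a₁ [MOD m₁] ∧ p ≡ a₂ [MOD m₂] := by
  obtain ⟨k, hk₁, hk₂⟩ := Nat.chineseRemainder hm a₁ a₂
  have hk : k.Coprime (m₁ * m₂) :=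
    Nat.Coprime.mul_right (hk₁.gcd_eq.trans ha₁) (hk₂.gcd_eq.trans ha₂)
  obtain ⟨p, hpn, hp, hpk⟩ := Nat.forall_exists_prime_gt_and_modEq n (mul_ne_zero hm₁ hm₂) hk
  exact ⟨p, hpn, hp, (hpk.of_mul_right _).trans hk₁, (hpk.of_mul_left _).trans hk₂⟩

theorem exists_prime_gt_jacobiSym_two_mul_eq_neg_one {m : ℕ} (hm : Odd m) (n : ℕ) :
    ∃ p > n, p.Prime ∧ jacobiSym (2 * m) p = -1 := by
  obtain ⟨p, hpn, hp, hp8 : p % 8 = 5, hpm⟩ := Nat.forall_exists_prime_gt_and_modEq_and_modEq n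
    (a₁ := 5) (a₂ := 1) (by norm_num) hm.pos.ne'
    (Nat.Coprime.pow_left 3 (Nat.coprime_two_left.2 hm)) (by norm_num) (Nat.coprime_one_left m)
  have hp4 : p % 4 = 1 := by omega
  have hpodd : Odd p := Nat.odd_iff.2 (by omega)
  refine ⟨p, hpn, hp, ?_⟩
  rw [jacobiSym.mul_left, jacobiSym.at_two hpodd, ZMod.χ₈_nat_mod_eight, hp8,
    jacobiSym.quadratic_reciprocity_one_mod_four' hm hp4,
    jacobiSym.mod_left' (Int.natCast_modEq_iff.2 hpm), Nat.cast_one, jacobiSym.one_left]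
  rfl

theorem exists_prime_gt_jacobiSym_prime_mul_eq_neg_one {q m : ℕ} (hq : q.Prime) (hq2 : q ≠ 2)
    (hqm : ¬q ∣ m) (n : ℕ) : ∃ p > n, p.Prime ∧ jacobiSym (q * m) p = -1 := by
  have := Fact.mk hq
  obtain ⟨c, hc⟩ := FiniteField.exists_nonsquare (F := ZMod q) (by rwa [ZMod.ringChar_zmod_n])
  have hJc : jacobiSym c.val q = -1 := by
    rw [ZMod.nonsquare_iff_jacobiSym_eq_neg_one]
    simpa using hc
  have hcq : c.val.Coprime q := by
    have h := mt (jacobiSym.eq_zero_iff_not_coprime (a := c.val) (b := q)).2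
      (by rw [hJc]; norm_num)
    simpa only [ne_eq, not_not, Int.gcd_natCast_natCast] using h
  have hm : m ≠ 0 := by rintro rfl; exact hqm (dvd_zero q)
  have hq4m : q.Coprime (4 * m) := Nat.Coprime.mul_right
    (Nat.Coprime.pow_right 2 (Nat.coprime_two_right.2 (hq.odd_of_ne_two hq2)))
    ((Nat.Prime.coprime_iff_not_dvd hq).2 hqm)
  obtain ⟨p, hpn, hp, hpc, hp1⟩ := Nat.forall_exists_prime_gt_and_modEq_and_modEq n
    hq.ne_zero (by positivity) hq4m hcq (Nat.coprime_one_left _)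
  have hp4 : p % 4 = 1 := hp1.of_mul_right m
  refine ⟨p, hpn, hp, ?_⟩
  rw [jacobiSym.mul_left,
    jacobiSym.quadratic_reciprocity_one_mod_four' (hq.odd_of_ne_two hq2) hp4,
    jacobiSym.mod_left' (Int.natCast_modEq_iff.2 hpc), hJc,
    jacobiSym.eq_of_modEq_right (a := m) (by simp) (Nat.odd_iff.2 (by omega)) hp1,
    jacobiSym.one_right]
  norm_num

theorem Squarefree.exists_prime_gt_jacobiSym_eq_neg_one {m : ℕ} (hm : Squarefree m)
    (hm1 : m ≠ 1) (n : ℕ) : ∃ p > n, p.Prime ∧ jacobiSym m p = -1 := by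
  by_cases h2 : 2 ∣ m
  · obtain ⟨m₁, rfl⟩ := h2
    have hm₁ : Odd m₁ := Nat.odd_iff.2 <| Nat.two_dvd_ne_zero.1 fun h =>
      absurd (hm 2 (mul_dvd_mul_left 2 h)) (by norm_num)
    push_cast
    exact exists_prime_gt_jacobiSym_two_mul_eq_neg_one hm₁ n
  · obtain ⟨q, hq, m₁, rfl⟩ := Nat.exists_prime_and_dvd hm1
    have hq2 : q ≠ 2 := by rintro rfl; exact h2 (dvd_mul_right 2 m₁)
    have hqm₁ : ¬q ∣ m₁ := fun h =>
      hq.one_lt.ne' (Nat.isUnit_iff.1 (hm q (mul_dvd_mul_left q h)))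
    push_cast
    exact exists_prime_gt_jacobiSym_prime_mul_eq_neg_one hq hq2 hqm₁ n

theorem exists_prime_gt_jacobiSym_eq_neg_one {m : ℕ} (hm : ¬IsSquare m) (n : ℕ) :
    ∃ p > n, p.Prime ∧ jacobiSym m p = -1 := by
  have hm0 : 0 < m := Nat.pos_of_ne_zero fun h => hm (h ▸ IsSquare.zero)
  obtain ⟨m₀, k, -, hk, rfl, hsf⟩ := Nat.sq_mul_squarefree_of_pos hm0
  have hm₀ : m₀ ≠ 1 := by
    rintro rfl
    exact hm ⟨k, by ring⟩
  obtain ⟨p, hpn, hp, hJ⟩ := hsf.exists_prime_gt_jacobiSym_eq_neg_one hm₀ (max n k)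
  have hkp : Int.gcd k p = 1 := by
    rw [Int.gcd_natCast_natCast]
    exact (Nat.coprime_of_lt_prime hk.ne' (lt_of_le_of_lt (le_max_right n k) hpn) hp).symm
  refine ⟨p, lt_of_le_of_lt (le_max_left n k) hpn, hp, ?_⟩
  push_cast
  rw [jacobiSym.mul_left, jacobiSym.sq_one' hkp, hJ, one_mul]

theorem exists_unit_jacobiSym_eq_neg_one {m N : ℕ} [NeZero N] (hm : ¬IsSquare m)
    (hN : 4 * m ∣ N) : ∃ u : (ZMod N)ˣ, jacobiSym m (u : ZMod N).val = -1 := by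
  obtain ⟨p, hpN, hp, hJ⟩ := exists_prime_gt_jacobiSym_eq_neg_one hm N
  refine ⟨ZMod.unitOfCoprime p (Nat.coprime_of_lt_prime (NeZero.ne N) hpN hp), ?_⟩
  have hN4 : 4 ≤ N := Nat.le_of_dvd (NeZero.pos N) ((dvd_mul_right 4 m).trans hN)
  rw [ZMod.coe_unitOfCoprime, ZMod.val_natCast, ← hJ]
  exact (jacobiSym.eq_of_modEq_right (by simpa using hN) (hp.odd_of_ne_two (by omega))
    (Nat.mod_modEq p N).symm).symm

theorem legendreSym_ne_neg_one_of_isSquare (p : ℕ) [Fact p.Prime] {a : ℤ} (ha : IsSquare a) :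
    legendreSym p a ≠ -1 := by
  obtain ⟨r, rfl⟩ := ha
  rw [legendreSym.mul]
  nlinarith [mul_self_nonneg (legendreSym p r)]

theorem infinite_setOf_legendreSym_eq_of_forall_not_isSquare {S : Finset ℕ}
    (hS : ∀ T ⊆ S, T.Nonempty → ¬IsSquare (∏ z ∈ T, z)) {ε : ℕ → ℤ}
    (hε : ∀ z ∈ S, ε z = 1 ∨ ε z = -1) :
    {p : ℕ | ∃ hp : Fact p.Prime, p ≠ 2 ∧ ∀ z ∈ S, @legendreSym p hp z = ε z}.Infinite := by
  classical
  set N := 4 * ∏ z ∈ S, z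
  have hN : N ≠ 0 := by
    refine mul_ne_zero (by norm_num) (prod_ne_zero_iff.2 fun z hz h0 => ?_)
    exact hS {z} (by simpa using hz) (singleton_nonempty z) (by simp [h0])
  have : NeZero N := ⟨hN⟩
  have hdvd : ∀ T ⊆ S, 4 * ∏ z ∈ T, z ∣ N := fun T hT =>
    mul_dvd_mul_left 4 (prod_dvd_prod_of_subset T S _ hT)
  let χ : S → (ZMod N)ˣ →* ℤ := fun z =>
    jacobiSymUnitsHom z (by simpa using hdvd {z.1} (by simp))
  have hχ : ∀ T : Finset S, T.Nonempty → ∏ z ∈ T, χ z ≠ 1 := by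
    intro T hT h1
    have hTS : T.map (Function.Embedding.subtype _) ⊆ S := fun _ hz =>
      property_of_mem_map_subtype T hz
    have hsq := hS _ hTS hT.map
    rw [prod_map] at hsq
    obtain ⟨u, hu⟩ := exists_unit_jacobiSym_eq_neg_one hsq (by simpa using hdvd _ hTS)
    simp only [Function.Embedding.subtype_apply, Nat.cast_prod] at hu
    have := DFunLike.congr_fun h1 u
    simp only [MonoidHom.finsetProd_apply, jacobiSymUnitsHom_apply, ← jacobiSym.prod_left, hu,
      MonoidHom.one_apply, χ] at this
    norm_num at this
  obtain ⟨u, hu⟩ := exists_forall_apply_eq_of_prod_ne_one χ hχ (fun z => ε z) fun z => hε z z.2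
  refine (Nat.infinite_setOfPred_prime_and_modEq hN (ZMod.val_coe_unit_coprime u)).mono ?_
  rintro p ⟨hp, hpu⟩
  have h2 : 2 ∣ N := dvd_mul_of_dvd_left (by norm_num) _
  have hu_odd := ZMod.odd_val_of_two_dvd h2 u
  have hodd : Odd p := (hpu.odd_iff h2).2 hu_odd
  refine ⟨⟨hp⟩, by rintro rfl; norm_num at hodd, fun z hz => ?_⟩
  rw [jacobiSym.legendreSym.to_jacobiSym, ← hu ⟨z, hz⟩]
  exact (jacobiSym.eq_of_modEq_right (by simpa using hdvd {z} (by simpa using hz)) hu_odd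
    hpu.symm).symm

theorem supports_all_patterns_iff_general (S : Finset ℕ) :
    (∀ T ⊆ S, T.Nonempty → ¬ IsSquare (∏ z ∈ T, z)) ↔
      ∀ ε : ℕ → ℤ, (∀ z ∈ S, ε z = 1 ∨ ε z = -1) →
        {p : ℕ | ∃ hp : Fact p.Prime, p ≠ 2 ∧
          ∀ z ∈ S, @legendreSym p hp (z : ℤ) = ε z}.Infinite := by
  refine ⟨fun hS ε hε => infinite_setOf_legendreSym_eq_of_forall_not_isSquare hS hε, ?_⟩
  rintro hpatterns T hTS ⟨z₀, hz₀⟩ hsq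
  let ε : ℕ → ℤ := fun z => if z = z₀ then -1 else 1
  obtain ⟨p, hp, -, hpε⟩ :=
    (hpatterns ε fun z _ => by by_cases h : z = z₀ <;> simp [ε, h]).nonempty
  apply legendreSym_ne_neg_one_of_isSquare p (a := ∏ z ∈ T, (z : ℤ))
    (by simpa only [map_prod, eq_natCast] using hsq.map (Nat.castRingHom ℤ))
  rw [show legendreSym p _ = ∏ z ∈ T, legendreSym p z from map_prod (legendreSym.hom p) _ T,
    prod_congr rfl fun z hz => hpε z (hTS hz),
    prod_ite_eq' T z₀, if_pos hz₀]

/-- A nonempty finite set `S` of positive integers supports all patterns (for every choice of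
signs `ε` on `S` there are infinitely many odd primes `p` with `χ_p ≡ ε` on `S`) if and only if
the product of the elements of every nonempty subset of `S` is not a perfect square. -/
theorem supports_all_patterns_iff (S : Finset ℕ) (hS : S.Nonempty)
    (hpos : ∀ z ∈ S, 0 < z) :
    (∀ T ⊆ S, T.Nonempty → ¬ IsSquare (∏ z ∈ T, z)) ↔
      ∀ ε : ℕ → ℤ, (∀ z ∈ S, ε z = 1 ∨ ε z = -1) →
        {p : ℕ | ∃ hp : Fact p.Prime, p ≠ 2 ∧
          ∀ z ∈ S, @legendreSym p hp (z : ℤ) = ε z}.Infinite :=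
  supports_all_patterns_iff_general S
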